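/- Let f, h_t : X → ℝ∪{±∞} (t ∈ T) be proper convex functions and λ ∈ ℝ^{(T)}_+. If f and λh satisfy condition (AC), then (f + λh)^c = (eco(f + λh))^c = e'co( f^c ⊕ (λh)^c ), and consequently (f + λh)^c ≤ f^c ⊕ (λh)^c pointwise on W. -/

import Mathlib

open scoped Pointwise

noncomputable section

variable {X : Type*} [AddCommGroup X] [Module ℝ X] [TopologicalSpace X]

/-- `Wsp X` is the parameter space `X* × X* × ℝ` used in the `c`-conjugation scheme. -/
abbrev Wsp (X : Type*) [AddCommGroup X] [Module ℝ X] [TopologicalSpace X] :=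
  (X →L[ℝ] ℝ) × (X →L[ℝ] ℝ) × ℝ

/-- The coupling function `c(x,(x*,y*,α)) = ⟨x,x*⟩` if `⟨x,y*⟩ < α`, `+∞` otherwise. -/
def coupling (x : X) (w : Wsp X) : EReal :=
  if w.2.1 x < w.2.2 then ((w.1 x : ℝ) : EReal) else ⊤

/-- The `c`-conjugate of `f : X → ℝ∪{±∞}`.  (EReal subtraction gives priority to `-∞`.) -/
def cConj (f : X → EReal) : Wsp X → EReal :=
  fun w => ⨆ x : X, coupling x w - f x

/-- The `c'`-conjugate of `k : W → ℝ∪{±∞}`. -/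
def cConj' (k : Wsp X → EReal) : X → EReal :=
  fun x => ⨆ w : Wsp X, coupling x w - k w

/-- Epigraph of an extended-real-valued function, as a subset of `Y × ℝ`. -/
def epiE {Y : Type*} (f : Y → EReal) : Set (Y × ℝ) :=
  {p | f p.1 ≤ (p.2 : EReal)}

/-- A set `C` is evenly convex (e-convex) if every point outside `C` can be strictly
separated from `C` by a continuous linear functional. -/
def EConvexSet {Y : Type*} [AddCommGroup Y] [Module ℝ Y] [TopologicalSpace Y]
    (C : Set Y) : Prop :=
  ∀ x₀ ∉ C, ∃ φ : Y →L[ℝ] ℝ, ∀ x ∈ C, φ x < φ x₀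

/-- A function is e-convex if its epigraph is an e-convex subset of `X × ℝ`. -/
def EConvexFn (f : X → EReal) : Prop := EConvexSet (epiE f)

/-- The e-convex hull of a function: its largest e-convex minorant. -/
def eco (f : X → EReal) : X → EReal :=
  fun x => ⨆ g : {g : X → EReal // EConvexFn g ∧ g ≤ f}, g.1 x

/-- A function `k : W → ℝ∪{±∞}` is e'-convex if it is the pointwise supremum of a family
of functions of the form `w ↦ c(x,w) - β` with `x ∈ X`, `β ∈ ℝ`. -/
def E'ConvexFn (k : Wsp X → EReal) : Prop :=
  ∃ S : Set (X × ℝ), k = fun w => ⨆ p ∈ S, (coupling p.1 w - ((p.2 : ℝ) : EReal))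

/-- The e'-convex hull of a function: its largest e'-convex minorant. -/
def e'co (k : Wsp X → EReal) : Wsp X → EReal :=
  fun w => ⨆ g : {g : Wsp X → EReal // E'ConvexFn g ∧ g ≤ k}, g.1 w

/-- A subset of `W × ℝ` is e'-convex if it is the epigraph of an e'-convex function. -/
def E'ConvexSet (D : Set (Wsp X × ℝ)) : Prop :=
  ∃ k : Wsp X → EReal, E'ConvexFn k ∧ D = epiE k

/-- The e'-convex hull of a set: the smallest e'-convex set containing it. -/
def e'coSet (D : Set (Wsp X × ℝ)) : Set (Wsp X × ℝ) :=
  ⋂₀ {E : Set (Wsp X × ℝ) | E'ConvexSet E ∧ D ⊆ E}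

/-- A function is proper if it never takes the value `-∞` and is not identically `+∞`. -/
def ProperFn {Y : Type*} (f : Y → EReal) : Prop :=
  (∀ x, f x ≠ ⊥) ∧ ∃ x, f x ≠ ⊤

/-- Convexity of an extended-real-valued function, via convexity of its epigraph. -/
def ConvexFn (f : X → EReal) : Prop := Convex ℝ (epiE f)

open Classical in
/-- Indicator function: `0` on `D`, `+∞` elsewhere. -/
def indicatorE {Y : Type*} (D : Set Y) : Y → EReal :=
  fun x => if x ∈ D then 0 else ⊤

/-- The `ε`-`c`-subdifferential of `f` at `xb`; empty if `f xb ∉ ℝ`. -/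
def cSubdiff (f : X → EReal) (ε : ℝ) (xb : X) : Set (Wsp X) :=
  {w | (∃ r : ℝ, f xb = (r : EReal)) ∧ w.2.1 xb < w.2.2 ∧
    ∀ x : X, coupling x w - coupling xb w - (ε : EReal) ≤ f x - f xb}

/-- The e-affine function with parameters `(x', y', α, β)`. -/
def eAffine (x' y' : X →L[ℝ] ℝ) (α β : ℝ) : X → EReal :=
  fun x => if y' x < α then ((x' x - β : ℝ) : EReal) else ⊤

/-- A function is e-affine if it equals `eAffine x' y' α β` for some parameters. -/
def IsEAffine (a : X → EReal) : Prop :=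
  ∃ x' y' α β, a = eAffine x' y' α β

/-- The set `Ẽ_{f₁,f₂}` of e-affine functions obtained by adding the parameters of an
e-affine minorant of `f₁` and one of `f₂`. -/
def ETilde (f₁ f₂ : X → EReal) : Set (X → EReal) :=
  {a | ∃ x₁ y₁ : X →L[ℝ] ℝ, ∃ α₁ β₁ : ℝ, ∃ x₂ y₂ : X →L[ℝ] ℝ, ∃ α₂ β₂ : ℝ,
    eAffine x₁ y₁ α₁ β₁ ≤ f₁ ∧ eAffine x₂ y₂ α₂ β₂ ≤ f₂ ∧
    a = eAffine (x₁ + x₂) (y₁ + y₂) (α₁ + α₂) (β₁ + β₂)}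

/-- The additivity condition (AC): `eco (f₁ + f₂) = sup {a : a ∈ Ẽ_{f₁,f₂}}`. -/
def ACcond (f₁ f₂ : X → EReal) : Prop :=
  eco (fun x => f₁ x + f₂ x) = fun x => ⨆ a ∈ ETilde f₁ f₂, a x

/-- Infimal convolution of two functions on `W`. -/
def infConv (k₁ k₂ : Wsp X → EReal) : Wsp X → EReal :=
  fun w => ⨅ w' : Wsp X, k₁ w' + k₂ (w - w')

/-- The DC objective `f - g`, defined to be `+∞` outside `dom f`. -/
def dcDiff (f g : X → EReal) : X → EReal :=
  fun x => if f x = ⊤ then ⊤ else f x - g x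

/-- `λh := Σ_{t∈T} λ_t h_t` for a nonnegative generalized finite sequence `λ`. -/
def lamh {T : Type*} (lam : T →₀ ℝ) (h : T → X → EReal) : X → EReal :=
  fun x => ∑ t ∈ lam.support, ((lam t : ℝ) : EReal) * h t x

/-- The set `B := ∩_{λ∈ℝ^{(T)}_+} {x : (eco λh)(x) ≤ 0}`. -/
def Bset {T : Type*} (h : T → X → EReal) : Set X :=
  {x | ∀ lam : T →₀ ℝ, (∀ t, 0 ≤ lam t) → eco (lamh lam h) x ≤ 0}

/-- The set `K := ∪_{λ∈ℝ^{(T)}_+} epi (λh)^c`. -/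
def Kset {T : Type*} (h : T → X → EReal) : Set (Wsp X × ℝ) :=
  ⋃ lam ∈ {l : T →₀ ℝ | ∀ t, 0 ≤ l t}, epiE (cConj (lamh lam h))


/-!
The pivot is that `g^c(w) ≤ r` holds exactly when the e-affine function with parameters `(w, r)`
minorizes `g`. As e-affine functions are e-convex, this gives `g^c = (eco g)^c`; it also shows
that `g^c` is the supremum of `c(x,·) - β` over the epigraph of `g`, hence e'-convex. Subadditivity
of `c(x,·)` gives `(f+g)^c ≤ f^c ⊕ g^c`. Conversely, if `c(x₀,·) - β ≤ f^c ⊕ g^c`, then every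
element of `Ẽ_{f,g}` is at most `β` at `x₀`, so by (AC) `eco(f+g)(x₀) ≤ β`, whence
`c(x₀,·) - β ≤ (eco(f+g))^c = (f+g)^c`.
-/

lemma coupling_ne_bot (x : X) (w : Wsp X) : coupling x w ≠ ⊥ := by
  unfold coupling; split_ifs <;> simp

lemma coupling_add_le (x : X) (w₁ w₂ : Wsp X) :
    coupling x (w₁ + w₂) ≤ coupling x w₁ + coupling x w₂ := by
  by_cases h₁ : w₁.2.1 x < w₁.2.2
  swap
  · rw [show coupling x w₁ = ⊤ from if_neg h₁, EReal.top_add_of_ne_bot (coupling_ne_bot _ _)]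
    exact le_top
  by_cases h₂ : w₂.2.1 x < w₂.2.2
  swap
  · rw [show coupling x w₂ = ⊤ from if_neg h₂, EReal.add_top_of_ne_bot (coupling_ne_bot _ _)]
    exact le_top
  have h : (w₁ + w₂).2.1 x < (w₁ + w₂).2.2 := by simpa using add_lt_add h₁ h₂
  simp only [coupling, if_pos h, if_pos h₁, if_pos h₂, Prod.fst_add, add_apply, EReal.coe_add,
    le_refl]

lemma coupling_sub_le_coe_iff (x : X) (w : Wsp X) (b : EReal) (r : ℝ) :
    coupling x w - b ≤ r ↔ eAffine w.1 w.2.1 w.2.2 r x ≤ b := by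
  unfold coupling eAffine
  split_ifs
  · induction b using EReal.rec with
    | bot =>
      simp only [EReal.coe_sub_bot, top_le_iff, le_bot_iff, EReal.coe_ne_top, EReal.coe_ne_bot]
    | coe b => norm_cast; constructor <;> intro <;> linarith
    | top => simp
  · induction b using EReal.rec <;> simp

lemma cConj_le_coe_iff {g : X → EReal} {w : Wsp X} {r : ℝ} :
    cConj g w ≤ r ↔ eAffine w.1 w.2.1 w.2.2 r ≤ g := by
  simp only [cConj, iSup_le_iff, coupling_sub_le_coe_iff, Pi.le_def]

lemma coupling_sub_le_cConj {g : X → EReal} {x : X} {b : EReal} (h : g x ≤ b) (w : Wsp X) :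
    coupling x w - b ≤ cConj g w :=
  (EReal.sub_le_sub le_rfl h).trans (le_iSup (fun y => coupling y w - g y) x)

lemma econvexFn_eAffine (x' y' : X →L[ℝ] ℝ) (α β : ℝ) : EConvexFn (eAffine x' y' α β) := by
  have mem_epi : ∀ p : X × ℝ, p ∈ epiE (eAffine x' y' α β) ↔ y' p.1 < α ∧ x' p.1 - β ≤ p.2 := by
    intro p
    simp only [epiE, eAffine, Set.mem_ofPred_eq]
    split_ifs with hp
    · rw [EReal.coe_le_coe_iff]; simp [hp]
    · simp [hp]
  intro p hp
  rw [mem_epi, not_and_or, not_lt, not_le] at hp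
  rcases hp with hy | hx
  · refine ⟨y'.comp (ContinuousLinearMap.fst ℝ X ℝ), fun q hq => ?_⟩
    simpa using ((mem_epi q).1 hq).1.trans_le hy
  · refine ⟨x'.comp (ContinuousLinearMap.fst ℝ X ℝ) - ContinuousLinearMap.snd ℝ X ℝ,
      fun q hq => ?_⟩
    have := ((mem_epi q).1 hq).2
    simp only [sub_apply, ContinuousLinearMap.comp_apply,
      ContinuousLinearMap.coe_fst', ContinuousLinearMap.coe_snd']
    linarith

lemma eco_le_self (g : X → EReal) : eco g ≤ g :=
  fun x => iSup_le fun g' => g'.2.2 x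

lemma le_eco {g' g : X → EReal} (hg' : EConvexFn g') (hle : g' ≤ g) : g' ≤ eco g :=
  fun x => le_iSup (fun p : {p : X → EReal // EConvexFn p ∧ p ≤ g} => p.1 x) ⟨g', hg', hle⟩

lemma cConj_eco (g : X → EReal) : cConj (eco g) = cConj g := by
  funext w
  refine le_antisymm (EReal.le_of_forall_lt_iff_le.1 fun r hr => ?_)
    (iSup_mono fun x => EReal.sub_le_sub le_rfl (eco_le_self g x))
  have hg : eAffine w.1 w.2.1 w.2.2 r ≤ g := cConj_le_coe_iff.1 hr.le
  exact cConj_le_coe_iff.2 (le_eco (econvexFn_eAffine _ _ _ _) hg)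

lemma e'convexFn_cConj (g : X → EReal) : E'ConvexFn (cConj g) := by
  refine ⟨epiE g, funext fun w => le_antisymm (iSup_le fun x => ?_)
    (iSup₂_le fun p hp => coupling_sub_le_cConj hp w)⟩
  refine EReal.le_of_forall_lt_iff_le.1 fun r hr => (coupling_sub_le_coe_iff _ _ _ _).2 ?_
  refine EReal.le_of_forall_lt_iff_le.1 fun β hβ => (coupling_sub_le_coe_iff _ _ _ _).1 ?_
  exact (le_iSup₂ (f := fun (p : X × ℝ) (_ : p ∈ epiE g) => coupling p.1 w - ((p.2 : ℝ) : EReal))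
    (x, β) hβ.le).trans hr.le

lemma le_e'co {k' k : Wsp X → EReal} (hk' : E'ConvexFn k') (hle : k' ≤ k) : k' ≤ e'co k :=
  fun w => le_iSup (fun p : {p : Wsp X → EReal // E'ConvexFn p ∧ p ≤ k} => p.1 w) ⟨k', hk', hle⟩

lemma e'co_le {k φ : Wsp X → EReal}
    (h : ∀ (x : X) (β : ℝ), (∀ w, coupling x w - β ≤ k w) → ∀ w, coupling x w - β ≤ φ w) :
    e'co k ≤ φ := by
  intro w
  refine iSup_le ?_
  rintro ⟨k', ⟨S, rfl⟩, hk'⟩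
  refine iSup₂_le fun p hp => h p.1 p.2 (fun w' => le_trans ?_ (hk' w')) w
  exact le_iSup₂ (f := fun (p : X × ℝ) (_ : p ∈ S) => coupling p.1 w' - ((p.2 : ℝ) : EReal)) p hp

lemma coupling_sub_add_le (x : X) (w w' : Wsp X) {a b : EReal} (ha : a ≠ ⊥) (hb : b ≠ ⊥) :
    coupling x w - (a + b) ≤ (coupling x w' - a) + (coupling x (w - w') - b) := by
  induction a using EReal.rec with
  | bot => exact absurd rfl ha
  | top => simp [EReal.top_add_of_ne_bot hb]
  | coe a =>
  induction b using EReal.rec with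
  | bot => exact absurd rfl hb
  | top => simp
  | coe b =>
  calc coupling x w - (a + b) ≤ (coupling x w' + coupling x (w - w')) - (a + b) :=
        EReal.sub_le_sub (by simpa using coupling_add_le x w' (w - w')) le_rfl
    _ = (coupling x w' - a) + (coupling x (w - w') - b) := by
        simp only [sub_eq_add_neg]
        rw [← EReal.coe_add, ← EReal.coe_neg, neg_add, EReal.coe_add, EReal.coe_neg,
          EReal.coe_neg, add_add_add_comm]

lemma cConj_add_le_infConv {f g : X → EReal} (hf : ∀ x, f x ≠ ⊥) (hg : ∀ x, g x ≠ ⊥) :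
    cConj (fun x => f x + g x) ≤ infConv (cConj f) (cConj g) :=
  fun w => le_iInf fun w' => iSup_le fun x =>
    (coupling_sub_add_le x w w' (hf x) (hg x)).trans
      (add_le_add (coupling_sub_le_cConj le_rfl w') (coupling_sub_le_cConj le_rfl (w - w')))

lemma ACcond.eco_add_le {f g : X → EReal} (hAC : ACcond f g) {x₀ : X} {β : ℝ}
    (h : ∀ w, coupling x₀ w - β ≤ infConv (cConj f) (cConj g) w) :
    eco (fun x => f x + g x) x₀ ≤ β := by
  rw [hAC]
  refine iSup₂_le ?_
  rintro _ ⟨x₁, y₁, α₁, β₁, x₂, y₂, α₂, β₂, ha₁, ha₂, rfl⟩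
  refine (coupling_sub_le_coe_iff x₀ ((x₁, y₁, α₁) + (x₂, y₂, α₂)) β
    (β₁ + β₂)).1 ((h _).trans ((iInf_le _ (x₁, y₁, α₁)).trans ?_))
  rw [add_sub_cancel_left, EReal.coe_add]
  exact add_le_add (cConj_le_coe_iff.2 ha₁) (cConj_le_coe_iff.2 ha₂)

lemma ACcond.cConj_add_eq_e'co_infConv {f g : X → EReal} (hAC : ACcond f g)
    (hf : ∀ x, f x ≠ ⊥) (hg : ∀ x, g x ≠ ⊥) :
    cConj (fun x => f x + g x) = e'co (infConv (cConj f) (cConj g)) := by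
  refine le_antisymm (le_e'co (e'convexFn_cConj _) (cConj_add_le_infConv hf hg))
    (e'co_le fun x₀ β hβ w => ?_)
  rw [← cConj_eco]
  exact coupling_sub_le_cConj (hAC.eco_add_le hβ) w

lemma lamh_ne_bot {Y T : Type*} {lam : T →₀ ℝ} (hlam : ∀ t, 0 ≤ lam t) {h : T → Y → EReal}
    (hh : ∀ t y, h t y ≠ ⊥) (x : Y) : lamh lam h x ≠ ⊥ :=
  Finset.sum_induction _ (· ≠ ⊥) (fun _ _ ha hb => EReal.add_ne_bot_iff.2 ⟨ha, hb⟩)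
    EReal.zero_ne_bot fun t _ => (EReal.mul_ne_bot _ _).2
      ⟨Or.inl (EReal.coe_ne_bot _), Or.inr (hh t x), Or.inl (EReal.coe_ne_top _),
        Or.inl (EReal.coe_nonneg.2 (hlam t))⟩

theorem stmt8_general {T : Type*}
    (f : X → EReal) (h : T → X → EReal)
    (hfp : ProperFn f)
    (hhp : ∀ t, ProperFn (h t))
    (lam : T →₀ ℝ) (hlam : ∀ t, 0 ≤ lam t)
    (hAC : ACcond f (lamh lam h)) :
    cConj (fun x => f x + lamh lam h x) = cConj (eco (fun x => f x + lamh lam h x)) ∧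
    cConj (fun x => f x + lamh lam h x) = e'co (infConv (cConj f) (cConj (lamh lam h))) ∧
    ∀ w : Wsp X, cConj (fun x => f x + lamh lam h x) w
      ≤ infConv (cConj f) (cConj (lamh lam h)) w := by
  have hlamh : ∀ x, lamh lam h x ≠ ⊥ := lamh_ne_bot hlam fun t => (hhp t).1
  exact ⟨(cConj_eco _).symm, hAC.cConj_add_eq_e'co_infConv hfp.1 hlamh,
    cConj_add_le_infConv hfp.1 hlamh⟩

/-- under (AC), `(f+λh)^c = (eco(f+λh))^c = e'co(f^c ⊕ (λh)^c) ≤ f^c ⊕ (λh)^c`. -/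
theorem stmt8 [IsTopologicalAddGroup X] [ContinuousSMul ℝ X] [LocallyConvexSpace ℝ X] [T2Space X] {T : Type*}
    (f : X → EReal) (h : T → X → EReal)
    (hfp : ProperFn f) (hfc : ConvexFn f)
    (hhp : ∀ t, ProperFn (h t)) (hhc : ∀ t, ConvexFn (h t))
    (lam : T →₀ ℝ) (hlam : ∀ t, 0 ≤ lam t)
    (hAC : ACcond f (lamh lam h)) :
    cConj (fun x => f x + lamh lam h x) = cConj (eco (fun x => f x + lamh lam h x)) ∧
    cConj (fun x => f x + lamh lam h x) = e'co (infConv (cConj f) (cConj (lamh lam h))) ∧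
    ∀ w : Wsp X, cConj (fun x => f x + lamh lam h x) w
      ≤ infConv (cConj f) (cConj (lamh lam h)) w :=
  stmt8_general f h hfp hhp lam hlam hAC

end
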